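/- For every smooth function U : ℝ × ℝ → ℝ, the Euler operator applied to F[U] := U_t − U_{xxt} + U_{xxxxt} + 3UU_x − 2U_xU_{xx} − UU_{xxx} + 2U_xU_{xxxx} + UU_{xxxxx} vanishes identically: E_U(F) := ∂F/∂U − D_x(∂F/∂U_x) − D_t(∂F/∂U_t) + D_x²(∂F/∂U_{xx}) + D_xD_t(∂F/∂U_{xt}) − ⋯ (alternating higher-order terms through fifth order) = 0 when evaluated along any smooth U. -/

import Mathlib

/-- Partial derivative in the first (space) variable `x`. -/
noncomputable def pdx (u : ℝ × ℝ → ℝ) : ℝ × ℝ → ℝ :=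
  fun p => deriv (fun x => u (x, p.2)) p.1

/-- Partial derivative in the second (time) variable `t`. -/
noncomputable def pdt (u : ℝ × ℝ → ℝ) : ℝ × ℝ → ℝ :=
  fun p => deriv (fun t => u (p.1, t)) p.2

/-- The higher order Camassa–Holm operator
`Δ[u] = u_t − u_{xxt} + u_{xxxxt} + 3uu_x − 2u_xu_{xx} − uu_{xxx} + 2u_xu_{xxxx} + uu_{xxxxx}`. -/
noncomputable def CH (u : ℝ × ℝ → ℝ) : ℝ × ℝ → ℝ := fun p =>
  pdt u p - pdx (pdx (pdt u)) p + pdx (pdx (pdx (pdx (pdt u)))) p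
    + 3 * u p * pdx u p - 2 * pdx u p * pdx (pdx u) p
    - u p * pdx (pdx (pdx u)) p
    + 2 * pdx u p * pdx (pdx (pdx (pdx u))) p
    + u p * pdx (pdx (pdx (pdx (pdx u)))) p

lemma slice_hasDerivAt (u : ℝ × ℝ → ℝ) (hu : ContDiff ℝ (⊤ : ℕ∞) u) (p : ℝ × ℝ) :
    HasDerivAt (fun x => u (x, p.2)) (pdx u p) p.1 := by
  have h1 : HasFDerivAt u (fderiv ℝ u (p.1, p.2)) (p.1, p.2) :=
    (hu.differentiable (by simp) (p.1, p.2)).hasFDerivAt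
  have h2 : HasDerivAt (fun x : ℝ => ((x, p.2) : ℝ × ℝ)) ((1 : ℝ), (0 : ℝ)) p.1 :=
    (hasDerivAt_id p.1).prodMk (hasDerivAt_const _ _)
  have h3 : HasDerivAt (fun x => u (x, p.2)) (fderiv ℝ u (p.1, p.2) (1, 0)) p.1 :=
    h1.comp_hasDerivAt p.1 h2
  exact h3.differentiableAt.hasDerivAt

lemma pdx_eq (u : ℝ × ℝ → ℝ) (hu : ContDiff ℝ (⊤ : ℕ∞) u) :
    pdx u = fun p => fderiv ℝ u p (1, 0) := by
  funext p
  have h1 : HasFDerivAt u (fderiv ℝ u p) p := (hu.differentiable (by simp) p).hasFDerivAt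
  have h2 : HasDerivAt (fun x : ℝ => ((x, p.2) : ℝ × ℝ)) ((1 : ℝ), (0 : ℝ)) p.1 :=
    (hasDerivAt_id p.1).prodMk (hasDerivAt_const _ _)
  exact (h1.comp_hasDerivAt p.1 h2).deriv

lemma pdx_smooth (u : ℝ × ℝ → ℝ) (hu : ContDiff ℝ (⊤ : ℕ∞) u) : ContDiff ℝ (⊤ : ℕ∞) (pdx u) := by
  rw [pdx_eq u hu]
  exact (hu.fderiv_right (by simp)).clm_apply contDiff_const

lemma pdx_const (c : ℝ) : pdx (fun _ => c) = fun _ => 0 := by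
  funext p; simp [pdx]

lemma pdt_const (c : ℝ) : pdt (fun _ => c) = fun _ => 0 := by
  funext p; simp [pdt]

lemma pdx_const_mul (c : ℝ) (u : ℝ × ℝ → ℝ) (hu : ContDiff ℝ (⊤ : ℕ∞) u) :
    pdx (fun q => c * u q) = fun q => c * pdx u q := by
  funext p
  exact ((slice_hasDerivAt u hu p).const_mul c).deriv

lemma pdx_neg (u : ℝ × ℝ → ℝ) : pdx (fun q => -u q) = fun q => -pdx u q := by
  funext p
  simp only [pdx]; exact deriv.neg (f := fun x => u (x, p.2)) (x := p.1)

/-- The Euler operator (variational derivative) applied to the higher order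
Camassa–Holm expression
`F[U] = U_t − U_{xxt} + U_{xxxxt} + 3UU_x − 2U_xU_{xx} − UU_{xxx} + 2U_xU_{xxxx} + UU_{xxxxx}`
vanishes identically for every smooth `U`.  Term by term (`E_U(F) = Σ_J (−D)_J ∂F/∂U_J`):
`∂F/∂U = 3U_x − U_{xxx} + U_{xxxxx}`, `∂F/∂U_t = 1`, `∂F/∂U_x = 3U − 2U_{xx} + 2U_{xxxx}`,
`∂F/∂U_{xx} = −2U_x`, `∂F/∂U_{xxx} = −U`, `∂F/∂U_{xxxx} = 2U_x`, `∂F/∂U_{xxxxx} = U`,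
`∂F/∂U_{xxt} = −1`, `∂F/∂U_{xxxxt} = 1`, with signs `(−1)^{|J|}`. -/
theorem CH_euler_operator_vanishes (U : ℝ × ℝ → ℝ) (hU : ContDiff ℝ (⊤ : ℕ∞) U) :
    ∀ p : ℝ × ℝ,
      (3 * pdx U p - pdx (pdx (pdx U)) p + pdx (pdx (pdx (pdx (pdx U)))) p)
        - pdt (fun _ => (1 : ℝ)) p
        - pdx (fun q => 3 * U q - 2 * pdx (pdx U) q + 2 * pdx (pdx (pdx (pdx U))) q) p
        + pdx (pdx (fun q => -2 * pdx U q)) p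
        - pdx (pdx (pdx (fun q => -U q))) p
        + pdx (pdx (pdx (pdx (fun q => 2 * pdx U q)))) p
        - pdx (pdx (pdx (pdx (pdx U)))) p
        - pdx (pdx (pdt (fun _ => (-1 : ℝ)))) p
        - pdx (pdx (pdx (pdx (pdt (fun _ => (1 : ℝ)))))) p = 0 := by
  intro p
  have h1 : ContDiff ℝ (⊤ : ℕ∞) (pdx U) := pdx_smooth U hU
  have h2 : ContDiff ℝ (⊤ : ℕ∞) (pdx (pdx U)) := pdx_smooth _ h1
  have h3 : ContDiff ℝ (⊤ : ℕ∞) (pdx (pdx (pdx U))) := pdx_smooth _ h2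
  have h4 : ContDiff ℝ (⊤ : ℕ∞) (pdx (pdx (pdx (pdx U)))) := pdx_smooth _ h3
  -- term 2 : pdt of a constant
  have e2 : pdt (fun _ => (1 : ℝ)) p = 0 := by rw [pdt_const]
  -- term 3 : pdx of the linear combination
  have e3 : pdx (fun q => 3 * U q - 2 * pdx (pdx U) q + 2 * pdx (pdx (pdx (pdx U))) q) p
      = 3 * pdx U p - 2 * pdx (pdx (pdx U)) p + 2 * pdx (pdx (pdx (pdx (pdx U)))) p := by
    have hd : HasDerivAt
        (fun x => 3 * U (x, p.2) - 2 * pdx (pdx U) (x, p.2)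
          + 2 * pdx (pdx (pdx (pdx U))) (x, p.2))
        (3 * pdx U p - 2 * pdx (pdx (pdx U)) p + 2 * pdx (pdx (pdx (pdx (pdx U)))) p) p.1 :=
      (((slice_hasDerivAt U hU p).const_mul 3).sub
        ((slice_hasDerivAt _ h2 p).const_mul 2)).add
        ((slice_hasDerivAt _ h4 p).const_mul 2)
    exact hd.deriv
  -- term 4
  have e4 : pdx (pdx (fun q => -2 * pdx U q)) p = -2 * pdx (pdx (pdx U)) p := by
    rw [pdx_const_mul (-2) _ h1, pdx_const_mul (-2) _ h2]
  -- term 5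
  have e5 : pdx (pdx (pdx (fun q => -U q))) p = -pdx (pdx (pdx U)) p := by
    rw [pdx_neg U, pdx_neg (pdx U), pdx_neg (pdx (pdx U))]
  -- term 6
  have e6 : pdx (pdx (pdx (pdx (fun q => 2 * pdx U q)))) p
      = 2 * pdx (pdx (pdx (pdx (pdx U)))) p := by
    rw [pdx_const_mul 2 _ h1, pdx_const_mul 2 _ h2, pdx_const_mul 2 _ h3,
      pdx_const_mul 2 _ h4]
  -- terms 8 and 9
  have e8 : pdx (pdx (pdt (fun _ => (-1 : ℝ)))) p = 0 := by
    rw [pdt_const, pdx_const, pdx_const]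
  have e9 : pdx (pdx (pdx (pdx (pdt (fun _ => (1 : ℝ)))))) p = 0 := by
    rw [pdt_const, pdx_const, pdx_const, pdx_const, pdx_const]
  rw [e2, e3, e4, e5, e6, e8, e9]
  ring
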